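/- arXiv:2411.08258 — 2 statements merged into one kernel-verified Lean document; each statement's English description precedes it below -/
import Mathlib

section
/- Let π ∈ S_n, let c_j = π^{−1}(j) for j = 0,…,n−1, and write R(π) = [a_0,…,a_{n−1}]. Then for every i with 0 ≤ i ≤ n−2, a_i equals the number of indices k ∈ {0,1,…,i} such that ((c_{n−1−k} − c_{n−1−i}) mod n) ≤ ((c_{n−2−i} − c_{n−1−i}) mod n); moreover a_{n−1} = n − c_0. -/
/-- Underlying function of the suffix block transposition `κ_{i,s}`:
`j ↦ j` for `j < i`, and `j ↦ i + ((j - i + s) mod (n - i))` for `i ≤ j ≤ n-1`. -/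
def kappaFun (n i s : ℕ) (j : Fin n) : Fin n :=
  if h : (j : ℕ) < i then j
  else ⟨i + (((j : ℕ) - i + s) % (n - i)), by
    have hj := j.isLt
    have hpos : 0 < n - i := by omega
    have hm := Nat.mod_lt ((j : ℕ) - i + s) hpos
    omega⟩

theorem kappaFun_injective (n i s : ℕ) : Function.Injective (kappaFun n i s) := by
  intro a b hab
  unfold kappaFun at hab
  by_cases ha : (a : ℕ) < i <;> by_cases hb : (b : ℕ) < i
  · rw [dif_pos ha, dif_pos hb] at hab
    exact hab
  · rw [dif_pos ha, dif_neg hb] at hab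
    have h := congrArg Fin.val hab
    simp only at h
    omega
  · rw [dif_neg ha, dif_pos hb] at hab
    have h := congrArg Fin.val hab
    simp only at h
    omega
  · rw [dif_neg ha, dif_neg hb] at hab
    have h := congrArg Fin.val hab
    simp only at h
    have h1 : ((a : ℕ) - i + s) % (n - i) = ((b : ℕ) - i + s) % (n - i) := by omega
    have h2 : ((a : ℕ) - i) % (n - i) = ((b : ℕ) - i) % (n - i) :=
      Nat.ModEq.add_right_cancel' s h1
    have ha' : (a : ℕ) - i < n - i := by have := a.isLt; omega
    have hb' : (b : ℕ) - i < n - i := by have := b.isLt; omega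
    rw [Nat.mod_eq_of_lt ha', Nat.mod_eq_of_lt hb'] at h2
    exact Fin.ext (by omega)

/-- The suffix block transposition `κ_{i,s}` as a permutation of `Fin n`. -/
noncomputable def kappa (n i s : ℕ) : Equiv.Perm (Fin n) :=
  Equiv.ofBijective _ (Finite.injective_iff_bijective.mp (kappaFun_injective n i s))

/-- `V_n`: vectors `[a_0,…,a_{n-1}]` with `1 ≤ a_j ≤ j+1` for each `j`. -/
def Vn (n : ℕ) : Set (Fin n → ℕ) :=
  {a | ∀ j : Fin n, 1 ≤ a j ∧ a j ≤ (j : ℕ) + 1}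

/-- `Φ([a_0,…,a_{n-1}]) = κ_{n-2,a_1} ∘ κ_{n-3,a_2} ∘ ⋯ ∘ κ_{1,a_{n-2}} ∘ κ_{0,a_{n-1}}`
(the factor for `j = 0` is `κ_{n-1,a_0}`, which is the identity permutation). -/
noncomputable def Phi (n : ℕ) (a : Fin n → ℕ) : Equiv.Perm (Fin n) :=
  ((List.finRange n).map (fun (j : Fin n) => kappa n (n - 1 - (j : ℕ)) (a j))).prod

/-- `W_{T,n}`: vectors in `V_n` whose parity (sum of components) is `≡ T (mod n)`. -/
def Wset (n : ℕ) (T : ℤ) : Set (Fin n → ℕ) :=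
  {a | a ∈ Vn n ∧ Int.ModEq (n : ℤ) ((∑ j, a j : ℕ) : ℤ) T}

/-- `C_{T,n} = {(Φ(α))⁻¹ : α ∈ W_{T,n}}`. -/
def Cset (n : ℕ) (T : ℤ) : Set (Equiv.Perm (Fin n)) :=
  {π | ∃ a ∈ Wset n T, π = (Phi n a)⁻¹}

/-- `cinv n π j = π⁻¹(j)` as a natural number (junk value `0` out of range). -/
def cinv (n : ℕ) (π : Equiv.Perm (Fin n)) (j : ℕ) : ℕ :=
  if h : j < n then (π.symm ⟨j, h⟩ : ℕ) else 0

/-- The `i`-th component of a vector indexed by `Fin n` (junk value `0` out of range). -/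
def Rcomp (n : ℕ) (v : Fin n → ℕ) (i : ℕ) : ℕ :=
  if h : i < n then v ⟨i, h⟩ else 0


/-! Let `ρ_m = κ_{m-1,a_{n-m}} ∘ ⋯ ∘ κ_{0,a_{n-1}}` be the product of the last `m` factors of
`Φ(a) = π`. The other factors fix every point below `m`, so `c_j = ρ_m⁻¹(j)` for `j < m`, and
`{c_j | j ≥ m} = ρ_m⁻¹{j | j ≥ m}`. With `m = n - 1 - i` this gives
`c_m = ρ_m⁻¹(κ_{m,a_i}⁻¹(m)) = ρ_m⁻¹(n - a_i)` and `c_{m-1} = ρ_m⁻¹(m - 1)`.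
Each `κ_{m,s}` rotates the block `[m, n)`, so by induction `ρ_m⁻¹` carries the cyclic order of
`[m - 1, n)` to the cyclic order of `ℤ/n`. The `k ≤ i` being counted are therefore the `t ∈ [m, n)`
met no later than `m - 1` when walking cyclically from `n - a_i` through `[m - 1, n)`, i.e. the
`a_i` points `t ≥ n - a_i`. For `i = n - 1` the same computation gives `c_0 = n - a_{n-1}`. -/

open Finset

section Kappa

variable {n m : ℕ}

lemma kappa_apply_of_lt (s : ℕ) {x : Fin n} (hx : (x : ℕ) < m) : kappa n m s x = x := by
  simp only [kappa, Equiv.ofBijective_apply, kappaFun, dif_pos hx]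

lemma val_kappa_apply_of_le (s : ℕ) {x : Fin n} (hx : m ≤ (x : ℕ)) :
    (kappa n m s x : ℕ) = m + ((x : ℕ) - m + s) % (n - m) := by
  simp only [kappa, Equiv.ofBijective_apply, kappaFun, dif_neg (not_lt.mpr hx)]

lemma kappa_symm_apply_of_lt (s : ℕ) {x : Fin n} (hx : (x : ℕ) < m) :
    (kappa n m s).symm x = x := by
  rw [Equiv.symm_apply_eq, kappa_apply_of_lt s hx]

lemma kappa_symm_apply_self {s : ℕ} (hs : 1 ≤ s) (hsm : s ≤ n - m) :
    (kappa n m s).symm ⟨m, by omega⟩ = ⟨n - s, by omega⟩ := by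
  rw [Equiv.symm_apply_eq]
  ext
  rw [val_kappa_apply_of_le s (by dsimp only; omega), show n - s - m + s = n - m by omega,
    Nat.mod_self]
  rfl

end Kappa

lemma le_val_apply_of_forall_lt_fixed {n m : ℕ} {σ : Equiv.Perm (Fin n)}
    (hσ : ∀ x : Fin n, (x : ℕ) < m → σ x = x) {x : Fin n} (hx : m ≤ (x : ℕ)) :
    m ≤ (σ x : ℕ) := by
  by_contra! h
  have := σ.injective (hσ _ h)
  omega

/-- `CyclicLE a b c`: walking upwards from `a` and wrapping around, `b` is reached no later
than `c`. -/
def CyclicLE {α : Type*} [LinearOrder α] (a b c : α) : Prop :=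
  if a ≤ b then c < a ∨ b ≤ c else c < a ∧ b ≤ c

instance {α : Type*} [LinearOrder α] (a b c : α) : Decidable (CyclicLE a b c) := by
  unfold CyclicLE; infer_instance

lemma emod_sub_le_emod_sub_iff_cyclicLE {m n x y z : ℕ} (hx : m ≤ x) (hy : m ≤ y)
    (hz : m ≤ z) (hxn : x < n) (hyn : y < n) (hzn : z < n) :
    ((y : ℤ) - x) % ((n - m : ℕ) : ℤ) ≤ ((z : ℤ) - x) % ((n - m : ℕ) : ℤ) ↔ CyclicLE x y z := by
  have dist : ∀ w : ℕ, m ≤ w → w < n → ((w : ℤ) - x) % ((n - m : ℕ) : ℤ) =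
      if x ≤ w then (w : ℤ) - x else (w : ℤ) - x + ((n - m : ℕ) : ℤ) := by
    intro w hw hwn
    split_ifs
    · apply Int.emod_eq_of_lt <;> omega
    · rw [← Int.add_emod_right]
      apply Int.emod_eq_of_lt <;> omega
  rw [dist y hy hyn, dist z hz hzn, CyclicLE]
  split_ifs <;> omega

lemma emod_sub_le_emod_sub_iff_cyclicLE_fin {n : ℕ} (x y z : Fin n) :
    ((y : ℤ) - (x : ℕ)) % n ≤ (((z : ℕ) : ℤ) - (x : ℕ)) % n ↔ CyclicLE (x : ℕ) y z := by
  simpa using emod_sub_le_emod_sub_iff_cyclicLE (Nat.zero_le x) (Nat.zero_le y) (Nat.zero_le z)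
    x.isLt y.isLt z.isLt

def PreservesCyclicLE {n : ℕ} (m : ℕ) (g : Fin n → Fin n) : Prop :=
  ∀ t t' t'' : Fin n, m ≤ (t : ℕ) → m ≤ (t' : ℕ) → m ≤ (t'' : ℕ) →
    (CyclicLE (g t : ℕ) (g t') (g t'') ↔ CyclicLE (t : ℕ) t' t'')

namespace PreservesCyclicLE

variable {n m : ℕ} {g h : Fin n → Fin n}

lemma mono {m' : ℕ} (hg : PreservesCyclicLE m g) (hm : m ≤ m') : PreservesCyclicLE m' g :=
  fun t t' t'' ht ht' ht'' => hg t t' t'' (hm.trans ht) (hm.trans ht') (hm.trans ht'')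

lemma comp (hg : PreservesCyclicLE m g) (hh : PreservesCyclicLE m h)
    (hmaps : ∀ t : Fin n, m ≤ (t : ℕ) → m ≤ (h t : ℕ)) : PreservesCyclicLE m (g ∘ h) :=
  fun t t' t'' ht ht' ht'' =>
    (hg _ _ _ (hmaps t ht) (hmaps t' ht') (hmaps t'' ht'')).trans (hh t t' t'' ht ht' ht'')

lemma symm {σ : Equiv.Perm (Fin n)} (hσ : PreservesCyclicLE m σ)
    (hfix : ∀ x : Fin n, (x : ℕ) < m → σ x = x) : PreservesCyclicLE m σ.symm := by
  intro t t' t'' ht ht' ht''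
  have hfix' : ∀ x : Fin n, (x : ℕ) < m → σ.symm x = x := fun x hx => by
    rw [Equiv.symm_apply_eq, hfix x hx]
  simpa using (hσ _ _ _ (le_val_apply_of_forall_lt_fixed hfix' ht)
    (le_val_apply_of_forall_lt_fixed hfix' ht') (le_val_apply_of_forall_lt_fixed hfix' ht'')).symm

end PreservesCyclicLE

lemma preservesCyclicLE_kappa (n m s : ℕ) : PreservesCyclicLE m (kappa n m s) := by
  intro t t' t'' ht ht' ht''
  set N : ℤ := ((n - m : ℕ) : ℤ)
  have shift : ∀ u : Fin n, m ≤ (u : ℕ) → ((kappa n m s u : ℕ) : ℤ) ≡ u + s [ZMOD N] := by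
    intro u hu
    rw [val_kappa_apply_of_le s hu]
    calc (((m + ((u : ℕ) - m + s) % (n - m) : ℕ)) : ℤ)
        = m + (((u : ℕ) - m + s : ℕ) : ℤ) % N := by push_cast; rfl
      _ ≡ m + (((u : ℕ) - m + s : ℕ) : ℤ) [ZMOD N] := (Int.mod_modEq _ _).add_left _
      _ = u + s := by push_cast [Nat.cast_sub hu]; ring
  have rot : ∀ u : Fin n, m ≤ (u : ℕ) →
      (((kappa n m s u : ℕ) : ℤ) - (kappa n m s t : ℕ)) % N = ((u : ℤ) - t) % N := fun u hu =>
    ((shift u hu).sub (shift t ht)).trans (by ring_nf; rfl)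
  have hmaps : ∀ u : Fin n, m ≤ (u : ℕ) → m ≤ (kappa n m s u : ℕ) := fun u hu => by
    rw [val_kappa_apply_of_le s hu]; omega
  rw [← emod_sub_le_emod_sub_iff_cyclicLE ht ht' ht'' t.isLt t'.isLt t''.isLt,
    ← emod_sub_le_emod_sub_iff_cyclicLE (hmaps t ht) (hmaps t' ht') (hmaps t'' ht'')
      (Fin.isLt _) (Fin.isLt _) (Fin.isLt _), rot t' ht', rot t'' ht'']

lemma preservesCyclicLE_kappa_symm (n m s : ℕ) : PreservesCyclicLE m (kappa n m s).symm :=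
  (preservesCyclicLE_kappa n m s).symm fun _ hx => kappa_apply_of_lt s hx

/-- The product of the last `m` factors `κ_{m-1,a_{n-m}} ∘ ⋯ ∘ κ_{0,a_{n-1}}` of `Phi n a`. -/
noncomputable def rho (n : ℕ) (a : Fin n → ℕ) : ℕ → Equiv.Perm (Fin n)
  | 0 => 1
  | m + 1 => kappa n m (Rcomp n a (n - 1 - m)) * rho n a m

section Rho

variable {n : ℕ} (a : Fin n → ℕ)

lemma rho_succ_symm_apply (m : ℕ) (x : Fin n) :
    (rho n a (m + 1)).symm x = (rho n a m).symm ((kappa n m (Rcomp n a (n - 1 - m))).symm x) :=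
  rfl

lemma rho_symm_apply_of_lt {m k : ℕ} {x : Fin n} (hx : (x : ℕ) < m) (hmk : m ≤ k) :
    (rho n a k).symm x = (rho n a m).symm x := by
  induction k, hmk using Nat.le_induction with
  | base => rfl
  | succ k hmk ih => rw [rho_succ_symm_apply, kappa_symm_apply_of_lt _ (by omega), ih]

lemma prod_drop_eq_rho :
    ∀ j ≤ n, (((List.finRange n).map
      (fun (j : Fin n) => kappa n (n - 1 - (j : ℕ)) (a j))).drop (n - j)).prod = rho n a j
  | 0, _ => by simp [rho, List.drop_eq_nil_of_le]
  | j + 1, hj => by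
    rw [List.drop_eq_getElem_cons (by simp; omega), List.prod_cons,
      show n - (j + 1) + 1 = n - j by omega, prod_drop_eq_rho j (by omega), rho]
    simp only [List.getElem_map, List.getElem_finRange, Fin.cast_mk, Rcomp,
      show n - 1 - (n - (j + 1)) = j by omega, show n - 1 - j < n by omega, dif_pos]
    congr 3
    ext
    simp only
    omega

lemma phi_eq_rho : Phi n a = rho n a n := by
  simpa [Phi] using prod_drop_eq_rho a n le_rfl

lemma preservesCyclicLE_rho_symm : ∀ m, PreservesCyclicLE m (rho n a (m + 1)).symm
  | 0 => by simpa [rho] using preservesCyclicLE_kappa_symm n 0 (Rcomp n a (n - 1))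
  | m + 1 => by
    have hmaps : ∀ t : Fin n, m + 1 ≤ (t : ℕ) →
        m + 1 ≤ ((kappa n (m + 1) (Rcomp n a (n - 1 - (m + 1)))).symm t : ℕ) :=
      fun _ => le_val_apply_of_forall_lt_fixed fun _ hx => kappa_symm_apply_of_lt _ hx
    exact ((preservesCyclicLE_rho_symm m).mono m.le_succ).comp
      (preservesCyclicLE_kappa_symm _ _ _) hmaps

end Rho

lemma Rcomp_mem_Icc {n : ℕ} {a : Fin n → ℕ} (ha : a ∈ Vn n) {i : ℕ} (hi : i < n) :
    1 ≤ Rcomp n a i ∧ Rcomp n a i ≤ i + 1 := by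
  simpa [Rcomp, hi] using ha ⟨i, hi⟩

lemma card_filter_range_eq_card_filter_fin {n i : ℕ} (hi : i < n) (Q : ℕ → Prop)
    [DecidablePred Q] :
    #{k ∈ range (i + 1) | Q (n - 1 - k)} = #{x : Fin n | n - 1 - i ≤ (x : ℕ) ∧ Q x} := by
  refine card_bij' (fun k _ => (⟨n - 1 - k, by omega⟩ : Fin n)) (fun x _ => n - 1 - x)
    (fun k hk => ?_) (fun x hx => ?_) (fun k hk => ?_) (fun x _ => ?_)
  · simp only [mem_filter, mem_range, mem_univ, true_and] at hk ⊢
    exact ⟨by omega, hk.2⟩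
  · simp only [mem_filter, mem_range, mem_univ, true_and] at hx ⊢
    rw [show n - 1 - (n - 1 - (x : ℕ)) = x by omega]
    exact ⟨by omega, hx.2⟩
  · simp only [mem_filter, mem_range] at hk
    dsimp only
    omega
  · ext
    dsimp only
    omega

lemma card_filter_le_val_apply_eq {n m : ℕ} {σ σ' : Equiv.Perm (Fin n)}
    (h : ∀ x : Fin n, (x : ℕ) < m → σ x = σ' x) (P : Fin n → Prop) [DecidablePred P] :
    #{x : Fin n | m ≤ (x : ℕ) ∧ P (σ x)} = #{x : Fin n | m ≤ (x : ℕ) ∧ P (σ' x)} := by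
  set δ : Equiv.Perm (Fin n) := σ.trans σ'.symm
  have hδ : ∀ x : Fin n, (x : ℕ) < m → δ x = x := fun x hx => by
    simp [δ, h x hx]
  have hδ' : ∀ x : Fin n, (x : ℕ) < m → δ.symm x = x := fun x hx => by
    rw [Equiv.symm_apply_eq, hδ x hx]
  apply card_nbij' δ δ.symm
  · intro x hx
    simp only [coe_filter, Set.mem_ofPred_eq, mem_univ, true_and] at hx ⊢
    exact ⟨le_val_apply_of_forall_lt_fixed hδ hx.1, by simpa [δ] using hx.2⟩
  · intro x hx
    simp only [coe_filter, Set.mem_ofPred_eq, mem_univ, true_and] at hx ⊢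
    exact ⟨le_val_apply_of_forall_lt_fixed hδ' hx.1, by simpa [δ] using hx.2⟩
  · intro x _
    simp
  · intro x _
    simp

lemma card_filter_le_val_and_le_val {n m s : ℕ} (hms : m ≤ n - s) (hs : 1 ≤ s) (hsn : s ≤ n) :
    #{x : Fin n | m ≤ (x : ℕ) ∧ n - s ≤ (x : ℕ)} = s := by
  have : ({x : Fin n | m ≤ (x : ℕ) ∧ n - s ≤ (x : ℕ)} : Finset (Fin n)) =
      Ici ⟨n - s, by omega⟩ := by
    ext x
    simp only [mem_filter, mem_univ, true_and, mem_Ici, Fin.le_def]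
    omega
  rw [this, Fin.card_Ici]
  dsimp only
  omega

lemma cinv_of_lt {n : ℕ} (π : Equiv.Perm (Fin n)) {j : ℕ} (hj : j < n) :
    cinv n π j = π.symm ⟨j, hj⟩ :=
  dif_pos hj

section PhiEq

variable {n : ℕ} {a : Fin n → ℕ} {π : Equiv.Perm (Fin n)}

lemma symm_apply_eq_rho_symm_apply (hπ : Phi n a = π) {m : ℕ} (hm : m ≤ n) {x : Fin n}
    (hx : (x : ℕ) < m) : π.symm x = (rho n a m).symm x := by
  rw [← hπ, phi_eq_rho, rho_symm_apply_of_lt a hx hm]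

lemma symm_apply_eq_rho_symm_apply_sub (hπ : Phi n a = π) {m : ℕ} (hm : m < n)
    (hs : 1 ≤ Rcomp n a (n - 1 - m)) (hsm : Rcomp n a (n - 1 - m) ≤ n - m) :
    π.symm ⟨m, hm⟩ = (rho n a m).symm ⟨n - Rcomp n a (n - 1 - m), by omega⟩ := by
  rw [symm_apply_eq_rho_symm_apply hπ hm (m.lt_succ_self), rho_succ_symm_apply,
    kappa_symm_apply_self hs hsm]

end PhiEq

lemma card_filter_cyclicLE_rho_symm {n : ℕ} (a : Fin n → ℕ) {j s : ℕ} (hs : 1 ≤ s)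
    (hsj : s ≤ n - (j + 1)) :
    #{x : Fin n | j + 1 ≤ (x : ℕ) ∧ CyclicLE ((rho n a (j + 1)).symm ⟨n - s, by omega⟩ : ℕ)
      ((rho n a (j + 1)).symm x) ((rho n a (j + 1)).symm ⟨j, by omega⟩)} = s := by
  refine Eq.trans ?_ (card_filter_le_val_and_le_val (n := n) (m := j + 1) (by omega) hs (by omega))
  refine congrArg card <| filter_congr fun x _ => and_congr_right fun hx => ?_
  rw [preservesCyclicLE_rho_symm a j _ _ _ (by dsimp only; omega) (by omega) le_rfl, CyclicLE]
  dsimp only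
  split_ifs <;> omega

lemma Rcomp_eq_card_filter {n : ℕ} {a : Fin n → ℕ} (ha : a ∈ Vn n) {π : Equiv.Perm (Fin n)}
    (hπ : Phi n a = π) {i : ℕ} (hi : i + 2 ≤ n) :
    Rcomp n a i = #{k ∈ range (i + 1) |
      ((cinv n π (n - 1 - k) : ℤ) - (cinv n π (n - 1 - i) : ℤ)) % (n : ℤ) ≤
        ((cinv n π (n - 2 - i) : ℤ) - (cinv n π (n - 1 - i) : ℤ)) % (n : ℤ)} := by
  obtain ⟨j, hj⟩ : ∃ j, n - 2 - i = j := ⟨_, rfl⟩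
  have hij : n - 1 - (j + 1) = i := by omega
  obtain ⟨hs, hsi⟩ := Rcomp_mem_Icc ha (show i < n by omega)
  set s := Rcomp n a i
  set ρ := (rho n a (j + 1)).symm
  have hstart : π.symm ⟨j + 1, by omega⟩ = ρ ⟨n - s, by omega⟩ := by
    simpa only [hij] using symm_apply_eq_rho_symm_apply_sub hπ (m := j + 1) (by omega)
      (by rwa [hij]) (by rw [hij]; omega)
  have hprev : π.symm ⟨j, by omega⟩ = ρ ⟨j, by omega⟩ :=
    symm_apply_eq_rho_symm_apply hπ (by omega) (j.lt_succ_self)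
  rw [card_filter_range_eq_card_filter_fin (by omega) fun y =>
      ((cinv n π y : ℤ) - (cinv n π (n - 1 - i) : ℤ)) % (n : ℤ) ≤
        ((cinv n π (n - 2 - i) : ℤ) - (cinv n π (n - 1 - i) : ℤ)) % (n : ℤ),
    show n - 1 - i = j + 1 by omega, hj,
    cinv_of_lt π (show j + 1 < n by omega), cinv_of_lt π (show j < n by omega), hstart, hprev]
  symm
  calc _ = #{x : Fin n | j + 1 ≤ (x : ℕ) ∧ CyclicLE (ρ ⟨n - s, by omega⟩ : ℕ) (π.symm x)
          (ρ ⟨j, by omega⟩)} := by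
        refine congrArg card (filter_congr fun x _ => and_congr_right fun _ => ?_)
        rw [cinv_of_lt π x.isLt, emod_sub_le_emod_sub_iff_cyclicLE_fin]
    _ = #{x : Fin n | j + 1 ≤ (x : ℕ) ∧ CyclicLE (ρ ⟨n - s, by omega⟩ : ℕ) (ρ x)
          (ρ ⟨j, by omega⟩)} :=
        card_filter_le_val_apply_eq (fun x hx => symm_apply_eq_rho_symm_apply hπ (by omega) hx)
          (fun y => CyclicLE (ρ ⟨n - s, by omega⟩ : ℕ) y (ρ ⟨j, by omega⟩))
    _ = s := card_filter_cyclicLE_rho_symm a hs (by omega)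

lemma Rcomp_sub_one_eq_sub_cinv_zero {n : ℕ} (hn : 0 < n) {a : Fin n → ℕ} (ha : a ∈ Vn n) {π : Equiv.Perm (Fin n)}
    (hπ : Phi n a = π) : Rcomp n a (n - 1) = n - cinv n π 0 := by
  obtain ⟨hs, hsn⟩ := Rcomp_mem_Icc ha (show n - 1 < n by omega)
  have h0 := symm_apply_eq_rho_symm_apply_sub hπ hn (by simpa using hs) (by simp; omega)
  rw [cinv_of_lt π hn, h0]
  simp only [rho, Nat.sub_zero, Equiv.Perm.one_def, Equiv.refl_symm, Equiv.refl_apply]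
  omega

theorem stmt_1_general (n : ℕ) (hn : 2 ≤ n)
    (R : Equiv.Perm (Fin n) → (Fin n → ℕ))
    (hR1 : ∀ π, R π ∈ Vn n) (hR2 : ∀ π, Phi n (R π) = π)
    (π : Equiv.Perm (Fin n)) :
    (∀ i : ℕ, i + 2 ≤ n →
      Rcomp n (R π) i =
        ((Finset.range (i + 1)).filter (fun k =>
          ((cinv n π (n - 1 - k) : ℤ) - (cinv n π (n - 1 - i) : ℤ)) % (n : ℤ) ≤
          ((cinv n π (n - 2 - i) : ℤ) - (cinv n π (n - 1 - i) : ℤ)) % (n : ℤ))).card) ∧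
    Rcomp n (R π) (n - 1) = n - cinv n π 0 :=
  ⟨fun _ hi => Rcomp_eq_card_filter (hR1 π) (hR2 π) hi, Rcomp_sub_one_eq_sub_cinv_zero (by omega) (hR1 π) (hR2 π)⟩

theorem stmt_1 (n : ℕ) (hn : 2 ≤ n)
    (R : Equiv.Perm (Fin n) → (Fin n → ℕ))
    (hR1 : ∀ π, R π ∈ Vn n) (hR2 : ∀ π, Phi n (R π) = π)
    (hR3 : ∀ a ∈ Vn n, R (Phi n a) = a)
    (π : Equiv.Perm (Fin n)) :
    (∀ i : ℕ, i + 2 ≤ n →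
      Rcomp n (R π) i =
        ((Finset.range (i + 1)).filter (fun k =>
          ((cinv n π (n - 1 - k) : ℤ) - (cinv n π (n - 1 - i) : ℤ)) % (n : ℤ) ≤
          ((cinv n π (n - 2 - i) : ℤ) - (cinv n π (n - 1 - i) : ℤ)) % (n : ℤ))).card) ∧
    Rcomp n (R π) (n - 1) = n - cinv n π 0 :=
  stmt_1_general n hn R hR1 hR2 π
end

section
/- If T_1 and T_2 are integers with T_1 ≢ T_2 (mod n), then the codes C_{T_1,n} and C_{T_2,n} are disjoint subsets of S_n. -/
/-!
Φ is injective on `V_n`, and the parity is a function of the vector, so codes for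
incongruent `T` cannot share a permutation. For injectivity split
`Φ(a) = P_m ∘ κ_{n-1-m, a_m} ∘ S_{m+1}` into the factors before, at and after position `m`.
The factors of `P_m` fix every point below their block start, in particular `n - 1 - m`, while
`κ_{n-1-m, a_m}` sends `n - a_m` to `n - 1 - m`. Hence `a_m = n - S_{m+1}(Φ(a)⁻¹(n - 1 - m))`,
and downward induction on `m`, starting from the empty suffix `S_n = 1`, recovers `a` from `Φ(a)`.
-/

lemma kappa_apply_of_lt_s2 {n i s : ℕ} {j : Fin n} (h : (j : ℕ) < i) : kappa n i s j = j := by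
  change kappaFun n i s j = j
  rw [kappaFun, dif_pos h]

lemma kappa_apply_sub {n i s : ℕ} (hi : i < n) (hs : 1 ≤ s) (hsi : s ≤ n - i) :
    kappa n i s ⟨n - s, by omega⟩ = ⟨i, hi⟩ := by
  change kappaFun n i s _ = _
  rw [kappaFun, dif_neg (by simp only; omega)]
  ext
  simp only
  rw [show n - s - i + s = n - i by omega, Nat.mod_self, add_zero]

lemma Equiv.Perm.list_prod_apply_eq_self {α : Type*} {l : List (Equiv.Perm α)} {x : α}
    (h : ∀ σ ∈ l, σ x = x) : l.prod x = x :=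
  MulAction.mem_stabilizer_iff.mp <| (MulAction.stabilizer _ x).list_prod_mem fun σ hσ ↦
    MulAction.mem_stabilizer_iff.mpr (h σ hσ)

section Phi

variable {n : ℕ} (a : Fin n → ℕ)

noncomputable def phiFactor (j : Fin n) : Equiv.Perm (Fin n) :=
  kappa n (n - 1 - j) (a j)

noncomputable def phiPrefix (m : ℕ) : Equiv.Perm (Fin n) :=
  (((List.finRange n).take m).map (phiFactor a)).prod

noncomputable def phiSuffix (m : ℕ) : Equiv.Perm (Fin n) :=
  (((List.finRange n).drop m).map (phiFactor a)).prod

lemma Phi_eq_phiPrefix_mul_phiSuffix (m : ℕ) : Phi n a = phiPrefix a m * phiSuffix a m := by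
  rw [phiPrefix, phiSuffix, ← List.prod_append, ← List.map_append, List.take_append_drop]
  rfl

lemma phiSuffix_self : phiSuffix a n = 1 := by
  rw [phiSuffix, List.drop_eq_nil_of_le (by simp)]
  rfl

lemma phiSuffix_eq_phiFactor_mul {m : ℕ} (hm : m < n) :
    phiSuffix a m = phiFactor a ⟨m, hm⟩ * phiSuffix a (m + 1) := by
  rw [phiSuffix, List.drop_eq_getElem_cons (by simpa using hm), List.map_cons, List.prod_cons]
  simp [phiSuffix]

lemma phiPrefix_apply_self {m : ℕ} (hm : m < n) :
    phiPrefix a m ⟨n - 1 - m, by omega⟩ = ⟨n - 1 - m, by omega⟩ := by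
  refine Equiv.Perm.list_prod_apply_eq_self fun σ hσ ↦ ?_
  obtain ⟨j, hj, rfl⟩ := List.mem_map.mp hσ
  have hjm : (j : ℕ) < m := by
    obtain ⟨k, hk, rfl⟩ := List.mem_iff_getElem.mp hj
    simp only [List.length_take, List.length_finRange] at hk
    simp only [List.getElem_take, List.getElem_finRange, Fin.val_cast]
    omega
  exact kappa_apply_of_lt_s2 (by simp only; omega)

lemma phiSuffix_succ_apply_Phi_inv (ha : a ∈ Vn n) {m : ℕ} (hm : m < n) :
    phiSuffix a (m + 1) ((Phi n a)⁻¹ ⟨n - 1 - m, by omega⟩) =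
      ⟨n - a ⟨m, hm⟩, by have := (ha ⟨m, hm⟩).1; omega⟩ := by
  obtain ⟨ha₁, ha₂ : a ⟨m, hm⟩ ≤ m + 1⟩ := ha ⟨m, hm⟩
  have hΦ : Phi n a ((phiSuffix a (m + 1))⁻¹ ⟨n - a ⟨m, hm⟩, by omega⟩) = ⟨n - 1 - m, by omega⟩ := by
    rw [Phi_eq_phiPrefix_mul_phiSuffix a m, phiSuffix_eq_phiFactor_mul a hm, Equiv.Perm.mul_apply,
      Equiv.Perm.mul_apply, Equiv.Perm.coe_inv, Equiv.apply_symm_apply, phiFactor,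
      kappa_apply_sub (i := n - 1 - m) (by omega) ha₁ (by omega), phiPrefix_apply_self a hm]
  rw [← hΦ]
  simp only [Equiv.Perm.coe_inv, Equiv.symm_apply_apply, Equiv.apply_symm_apply]

end Phi

section Injectivity

variable {n : ℕ} {a a' : Fin n → ℕ}

lemma apply_eq_of_Phi_eq_of_phiSuffix_eq (ha : a ∈ Vn n) (ha' : a' ∈ Vn n)
    (h : Phi n a = Phi n a') {m : ℕ} (hm : m < n)
    (hsuffix : phiSuffix a (m + 1) = phiSuffix a' (m + 1)) : a ⟨m, hm⟩ = a' ⟨m, hm⟩ := by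
  have hread := phiSuffix_succ_apply_Phi_inv a ha hm
  rw [h, hsuffix, phiSuffix_succ_apply_Phi_inv a' ha' hm, Fin.mk.injEq] at hread
  have hle : a ⟨m, hm⟩ ≤ m + 1 := (ha ⟨m, hm⟩).2
  have hle' : a' ⟨m, hm⟩ ≤ m + 1 := (ha' ⟨m, hm⟩).2
  omega

lemma phiSuffix_eq_of_Phi_eq (ha : a ∈ Vn n) (ha' : a' ∈ Vn n) (h : Phi n a = Phi n a')
    {m : ℕ} (hm : m ≤ n) : phiSuffix a m = phiSuffix a' m := by
  induction hm using Nat.decreasingInduction with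
  | self => rw [phiSuffix_self, phiSuffix_self]
  | of_succ m hm ih =>
    rw [phiSuffix_eq_phiFactor_mul a hm, phiSuffix_eq_phiFactor_mul a' hm, ih, phiFactor, phiFactor,
      apply_eq_of_Phi_eq_of_phiSuffix_eq ha ha' h hm ih]

end Injectivity

lemma Phi_injOn (n : ℕ) : Set.InjOn (Phi n) (Vn n) := fun _ ha _ ha' h ↦ funext fun j ↦
  apply_eq_of_Phi_eq_of_phiSuffix_eq ha ha' h j.isLt (phiSuffix_eq_of_Phi_eq ha ha' h j.isLt)

theorem stmt_2_general (n : ℕ) (T₁ T₂ : ℤ)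
    (h : ¬ Int.ModEq (n : ℤ) T₁ T₂) :
    Disjoint (Cset n T₁) (Cset n T₂) := by
  rw [Set.disjoint_left]
  rintro _ ⟨a, ⟨haV, haT⟩, rfl⟩ ⟨b, ⟨hbV, hbT⟩, hab⟩
  obtain rfl := Phi_injOn n haV hbV (inv_injective hab)
  exact h (haT.symm.trans hbT)

theorem stmt_2 (n : ℕ) (hn : 2 ≤ n) (T₁ T₂ : ℤ)
    (h : ¬ Int.ModEq (n : ℤ) T₁ T₂) :
    Disjoint (Cset n T₁) (Cset n T₂) :=
  stmt_2_general n T₁ T₂ h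
end
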